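/- Two-row Schur multiple zeta values as differences of products of multiple zeta-star values: Let a, c ≥ 0 be integers, let λ = ((a+c+2)^2) be the rectangular partition with two rows of length a+c+2, and let s be the filling of D(λ) given by s_{1,j} = 1 for 1 ≤ j ≤ a and s_{1,j} = 2 for a+1 ≤ j ≤ a+c+2 in the first row, and s_{2,j} = 1 for 1 ≤ j ≤ a+1 and s_{2,j} = 2 for a+2 ≤ j ≤ a+c+2 in the second row. Then the limit lim_{M→∞} ζ^M_{λ}(s) exists and equals ζ^⋆({1}^{a+1},{2}^{c+1}) · ζ^⋆({1}^{a},{2}^{c+2}) − ζ^⋆({1}^{a+1},{2}^{c+2}) · ζ^⋆({1}^{a},{2}^{c+1}), where all four multiple zeta-star series converge. -/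

import Mathlib

open Matrix BigOperators Finset Filter

/-- Extend a `Fin N`-indexed matrix to `ℕ` indices by zero. -/
def matExt {R : Type*} [Zero R] {N : ℕ} (U : Matrix (Fin N) (Fin N) R) : ℕ → ℕ → R :=
  fun i j => if hi : i < N then (if hj : j < N then U ⟨i, hi⟩ ⟨j, hj⟩ else 0) else 0

/-- `U` is upper unitriangular. -/
def UpperUni {R : Type*} [Zero R] [One R] {N : ℕ} (U : Matrix (Fin N) (Fin N) R) : Prop :=
  (∀ i, U i i = 1) ∧ ∀ i j : Fin N, (j : ℕ) < (i : ℕ) → U i j = 0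

/-- `L` is lower unitriangular. -/
def LowerUni {R : Type*} [Zero R] [One R] {N : ℕ} (L : Matrix (Fin N) (Fin N) R) : Prop :=
  (∀ i, L i i = 1) ∧ ∀ i j : Fin N, (i : ℕ) < (j : ℕ) → L i j = 0

/-- 0-based entries of the Maya diagram `J(λ;r)` (the `a`-th smallest element, minus 1):
for `a = 0,…,r-1` this is `λ_{r-a} + a` (with `λ` 0-based). -/
def maya (lam : ℕ → ℕ) (r : ℕ) (a : Fin r) : ℕ := lam (r - 1 - (a : ℕ)) + (a : ℕ)

/-- The ninth variation of the skew Schur function `S^{(r)}_{λ/μ}(U)`: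
the minor of `U` on rows `J(μ;r)` and columns `J(λ;r)`. -/
def SchurV {R : Type*} [CommRing R] {N : ℕ} (U : Matrix (Fin N) (Fin N) R)
    (r : ℕ) (lam mu : ℕ → ℕ) : R :=
  Matrix.det (Matrix.of fun i j : Fin r => matExt U (maya mu r i) (maya lam r j))

/-- Conjugate partition (0-based), counting parts among indices `< B`. -/
def conjF (f : ℕ → ℕ) (B : ℕ) : ℕ → ℕ :=
  fun i => ((Finset.range B).filter fun j => i + 1 ≤ f j).card

/-- The hook partition `(a+1, 1^b)` (0-based function). -/
def hookP (a b : ℕ) : ℕ → ℕ := fun k => if k = 0 then a + 1 else if k ≤ b then 1 else 0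

/-- `h^{(r)}_d(U) = S^{(r)}_{(d)}(U)`, zero for `d < 0`. -/
def hSV {R : Type*} [CommRing R] {N : ℕ} (U : Matrix (Fin N) (Fin N) R) (r : ℕ) (d : ℤ) : R :=
  if 0 ≤ d then SchurV U r (fun k => if k = 0 then d.toNat else 0) (fun _ => 0) else 0

/-- `e^{(r)}_d(U) = S^{(r)}_{(1^d)}(U)`, zero for `d < 0`. -/
def eSV {R : Type*} [CommRing R] {N : ℕ} (U : Matrix (Fin N) (Fin N) R) (r : ℕ) (d : ℤ) : R :=
  if 0 ≤ d then SchurV U r (fun k => if k < d.toNat then 1 else 0) (fun _ => 0) else 0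

/-- The partition with Frobenius coordinates `(a|b)` (all 0-based as functions). -/
def frobP (p : ℕ) (a b : Fin p → ℕ) : ℕ → ℕ :=
  fun i => if h : i < p then a ⟨i, h⟩ + i + 1
    else (Finset.univ.filter fun j : Fin p => i < b j + (j : ℕ) + 1).card

/-- `f : ℕ → ℤ` is a partition of length `≤ B`. -/
def IsPartZ (B : ℕ) (f : ℕ → ℤ) : Prop :=
  (∀ i, f (i + 1) ≤ f i) ∧ (∀ i, 0 ≤ f i) ∧ (∀ i, B ≤ i → f i = 0)

/-- `lam/mu` is a skew partition (of length `≤ B`). -/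
def IsSkewZ (B : ℕ) (lam mu : ℕ → ℤ) : Prop :=
  IsPartZ B lam ∧ IsPartZ B mu ∧ ∀ i, mu i ≤ lam i

open Classical in
/-- `S^{(r)}_{λ/μ}(U)` with the convention that it is `0` if `λ/μ` is not a skew partition. -/
noncomputable def SchurVz {R : Type*} [CommRing R] {N : ℕ} (U : Matrix (Fin N) (Fin N) R)
    (r B : ℕ) (lam mu : ℕ → ℤ) : R :=
  if IsSkewZ B lam mu then SchurV U r (fun i => (lam i).toNat) (fun i => (mu i).toNat) else 0

open Classical in
/-- `S^{(r)}_{λ'/μ'}(U)` applied to the conjugates, with the zero convention. -/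
noncomputable def SchurVzConj {R : Type*} [CommRing R] {N : ℕ} (U : Matrix (Fin N) (Fin N) R)
    (r B : ℕ) (lam mu : ℕ → ℤ) : R :=
  if IsSkewZ B lam mu then
    SchurV U r (conjF (fun i => (lam i).toNat) B) (conjF (fun i => (mu i).toNat) B) else 0

/-- `lam/mu` is a skew partition (ℕ-valued version). -/
def IsSkewN (B : ℕ) (lam mu : ℕ → ℕ) : Prop :=
  (∀ i, lam (i + 1) ≤ lam i) ∧ (∀ i, mu (i + 1) ≤ mu i) ∧ (∀ i, mu i ≤ lam i) ∧
    (∀ i, B ≤ i → lam i = 0)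

open Classical in
noncomputable def SchurVn {R : Type*} [CommRing R] {N : ℕ} (U : Matrix (Fin N) (Fin N) R)
    (r B : ℕ) (lam mu : ℕ → ℕ) : R :=
  if IsSkewN B lam mu then SchurV U r lam mu else 0

/-- The rectangular partition `[m|n] = (n^m)`. -/
def rectP (m n : ℕ) : ℕ → ℕ := fun i => if i < m then n else 0

/-- `[m|n]^l = ((n+1)^l, n^{m-l})`. -/
def rectUpP (m n l : ℕ) : ℕ → ℕ := fun i => if i < l then n + 1 else if i < m then n else 0

/-- `[m|n]_k = (n^m, k)`. -/
def rectLowP (m n k : ℕ) : ℕ → ℕ := fun i => if i < m then n else if i = m then k else 0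

/-- `E + c·E_{t,t+1}` (indices 0-based). -/
def elemMat {R : Type*} [CommRing R] (N t : ℕ) (c : R) : Matrix (Fin N) (Fin N) R :=
  1 + Matrix.of (fun i j : Fin N => if (i : ℕ) = t ∧ (j : ℕ) = t + 1 then c else 0)

/-- `U = U_1 ⋯ U_M` with `U_k = (E + w_{k,1-r}E_{1,2}) ⋯ (E + w_{k,N-1-r}E_{N-1,N})`. -/
def UmatW {R : Type*} [CommRing R] (N M : ℕ) (r : ℤ) (w : ℕ → ℤ → R) :
    Matrix (Fin N) (Fin N) R :=
  ((List.range M).map fun k =>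
    ((List.range (N - 1)).map fun t => elemMat N t (w (k + 1) ((t : ℤ) + 1 - r))).prod).prod

/-- The partition `(m_1^{r_1} m_2^{r_2-r_1} ⋯ m_n^{r_n-r_{n-1}})` (corner data 0-based). -/
def stepPart (n : ℕ) (m rr : ℕ → ℕ) : ℕ → ℕ :=
  fun i =>
    if h : (((Finset.range n).filter fun j => i < rr j)).Nonempty then
      m (((Finset.range n).filter fun j => i < rr j).min' h)
    else 0

/-- `Add_{a,b}` (rows 1-based in `a`, `b`; the function argument is 0-based). -/
def AddOp (a b : ℕ) (k : ℕ → ℕ) : ℕ → ℕ := fun i =>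
  if i + 1 ≤ a then k i
  else if i + 1 = a + 1 then k (a - 1)
  else if i + 1 ≤ b + 1 then k (i - 1) + 1
  else k i

/-- `Rem_{a,b}`. -/
def RemOp (a b : ℕ) (k : ℕ → ℕ) : ℕ → ℕ := fun i =>
  if i + 1 < a then k i
  else if i + 1 ≤ b - 1 then k (i + 1) - 1
  else if i + 1 = b then k b
  else k i

/-- `op_{a 0, b 0} ∘ op_{a 1, b 1} ∘ ⋯ ∘ op_{a (t-1), b (t-1)}` applied to `k`. -/
def iterOp (op : ℕ → ℕ → (ℕ → ℕ) → ℕ → ℕ) (t : ℕ) (a b : ℕ → ℕ) (k : ℕ → ℕ) : ℕ → ℕ :=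
  (List.range t).foldr (fun i acc => op (a i) (b i) acc) k

/-- the `i`-th smallest element of a finite set of naturals (0-based). -/
def ascNth (s : Finset ℕ) (i : ℕ) : ℕ := (s.sort (· ≤ ·)).getD i 0

/-- The cells of the skew Young diagram `D(λ/μ)` (0-based, rows `< B`). -/
def cellsD (B : ℕ) (lam mu : ℕ → ℕ) : Finset (ℕ × ℕ) :=
  (Finset.range B ×ˢ Finset.range (lam 0 + 1)).filter fun p => mu p.1 ≤ p.2 ∧ p.2 < lam p.1

/-- Semistandardness: weakly increasing along rows, strictly increasing down columns. -/
def IsSSYT {M B : ℕ} {lam mu : ℕ → ℕ} (T : ↥(cellsD B lam mu) → Fin M) : Prop :=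
  (∀ c c' : ↥(cellsD B lam mu), c.val.1 = c'.val.1 → c.val.2 ≤ c'.val.2 → T c ≤ T c') ∧
  (∀ c c' : ↥(cellsD B lam mu), c.val.1 < c'.val.1 → c.val.2 = c'.val.2 → T c < T c')

open Classical in
/-- Sum over all semistandard tableaux of shape `λ/μ` with entries in `{1,…,M}` of
the product over cells `c` of `f (entry) c`. -/
noncomputable def tabSum {R : Type*} [CommRing R] (M B : ℕ) (lam mu : ℕ → ℕ)
    (f : ℕ → ℕ × ℕ → R) : R :=
  ∑ T ∈ Finset.univ.filter (fun T : ↥(cellsD B lam mu) → Fin M => IsSSYT T),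
    ∏ c : ↥(cellsD B lam mu), f ((T c : ℕ) + 1) c.val

/-- `M`-truncated Schur multiple zeta value for a general filling `s` of the diagram. -/
noncomputable def zetaTF (M B : ℕ) (lam mu : ℕ → ℕ) (s : ℕ × ℕ → ℂ) : ℂ :=
  tabSum M B lam mu fun k c => (k : ℂ) ^ (-(s c))

/-- `M`-truncated diagonally constant Schur multiple zeta value `ζ^M_{λ/μ}(a)`. -/
noncomputable def zetaT (M B : ℕ) (lam mu : ℕ → ℕ) (a : ℤ → ℂ) : ℂ :=
  zetaTF M B lam mu fun c => a ((c.2 : ℤ) - (c.1 : ℤ))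

open Classical in
/-- `ζ^M_{λ/μ}(a)` with the zero convention for non-skew shapes. -/
noncomputable def zetaZ (M B : ℕ) (lam mu : ℕ → ℤ) (a : ℤ → ℂ) : ℂ :=
  if IsSkewZ B lam mu then
    zetaT M B (fun i => (lam i).toNat) (fun i => (mu i).toNat) a else 0

open Classical in
/-- `ζ^M_{λ'/μ'}(a)` applied to conjugates, with the zero convention. -/
noncomputable def zetaZConj (M B : ℕ) (lam mu : ℕ → ℤ) (a : ℤ → ℂ) : ℂ :=
  if IsSkewZ B lam mu then
    zetaT M (lam 0).toNat (conjF (fun i => (lam i).toNat) B)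
      (conjF (fun i => (mu i).toNat) B) a
  else 0

open Classical in
/-- `M`-truncated multiple zeta-star value `ζ^{⋆,M}(s_0,…,s_{d-1})`. -/
noncomputable def zetaStarT (M d : ℕ) (s : ℕ → ℂ) : ℂ :=
  ∑ f ∈ Finset.univ.filter (fun f : Fin d → Fin M => ∀ i j : Fin d, i ≤ j → f i ≤ f j),
    ∏ i : Fin d, (((f i : ℕ) + 1 : ℕ) : ℂ) ^ (-(s i))

open Classical in
/-- `M`-truncated multiple zeta value `ζ^{M}(s_0,…,s_{d-1})`. -/
noncomputable def zetaMT (M d : ℕ) (s : ℕ → ℂ) : ℂ :=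
  ∑ f ∈ Finset.univ.filter (fun f : Fin d → Fin M => ∀ i j : Fin d, i < j → f i < f j),
    ∏ i : Fin d, (((f i : ℕ) + 1 : ℕ) : ℂ) ^ (-(s i))

/-- The Riemann zeta value `ζ(k) = Σ_{n ≥ 1} n^{-k}`. -/
noncomputable def zetaVal (k : ℕ) : ℂ := ∑' n : ℕ, ((n + 1 : ℕ) : ℂ) ^ (-(k : ℤ))

/-- `ζ^⋆(1,k) = Σ_{1 ≤ m ≤ n} m^{-1} n^{-k}`. -/
noncomputable def zetaStarOne (k : ℕ) : ℂ :=
  ∑' n : ℕ, (∑ m ∈ Finset.Icc 1 (n + 1), ((m : ℂ))⁻¹) * ((n + 1 : ℕ) : ℂ) ^ (-(k : ℤ))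

/-!
A semistandard tableau of shape `(N, N)` is a pair of weakly increasing rows, the top one `p`
and the bottom one `q`, with `p j < q j` in every column; its weight is a product over the cells.
Dropping the column condition gives the product of two truncated zeta-star sums. The pairs
violating it are matched weight-preservingly with pairs of monotone tuples of lengths `N + 1` and
`N - 1` by exchanging the tails of `q` and `p` after their first crossing (the
Lindström–Gessel–Viennot involution), so the identity already holds for every truncation `M`.
The truncated zeta-star sums are real, increasing in `M`, and bounded: on monotone tuples the
excess of the last exponent over `1` can be spread over all factors, which dominates the sum by a
power of a convergent `p`-series.
-/

def padTuple {M d : ℕ} (f : Fin d → Fin M) : ℕ → ℕ :=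
  fun i => if h : i < d then f ⟨i, h⟩ else 0

lemma padTuple_injective {M d : ℕ} :
    Function.Injective (padTuple : (Fin d → Fin M) → ℕ → ℕ) :=
  fun f f' h => funext fun i => Fin.ext <| by simpa [padTuple] using congrFun h i

open Classical in
/-- Monotone tuples `Fin d → Fin M`, extended by zero to `ℕ → ℕ` so that tuples of different
lengths live in one type. -/
noncomputable def monotoneTuples (M d : ℕ) : Finset (ℕ → ℕ) :=
  (univ.filter fun f : Fin d → Fin M => ∀ i j, i ≤ j → f i ≤ f j).image padTuple

lemma mem_monotoneTuples {M d : ℕ} {g : ℕ → ℕ} :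
    g ∈ monotoneTuples M d ↔
      (∀ i j, i ≤ j → j < d → g i ≤ g j) ∧ (∀ i < d, g i < M) ∧ ∀ i, d ≤ i → g i = 0 := by
  classical
  simp only [monotoneTuples, mem_image, mem_filter, mem_univ, true_and]
  constructor
  · rintro ⟨f, hf, rfl⟩
    refine ⟨fun i j hij hj => ?_, fun i hi => ?_, fun i hi => ?_⟩
    · simpa [padTuple, hj, hij.trans_lt hj] using hf ⟨i, hij.trans_lt hj⟩ ⟨j, hj⟩ hij
    · simp [padTuple, hi]
    · simp [padTuple, hi.not_gt]
  · rintro ⟨hmono, hlt, hzero⟩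
    refine ⟨fun i => ⟨g i, hlt i i.isLt⟩, fun i j hij => hmono i j hij j.isLt,
      funext fun i => ?_⟩
    by_cases hi : i < d
    · simp [padTuple, hi]
    · simp [padTuple, hi, hzero i (not_lt.mp hi)]

lemma monotoneTuples_mono {d : ℕ} : Monotone fun M => monotoneTuples M d := by
  intro M M' hM g hg
  obtain ⟨hmono, hlt, hzero⟩ := mem_monotoneTuples.mp hg
  exact mem_monotoneTuples.mpr ⟨hmono, fun i hi => (hlt i hi).trans_le hM, hzero⟩

open Classical in
lemma sum_monotoneTuples_prod {R : Type*} [CommSemiring R] (M d : ℕ) (F : ℕ → ℕ → R) :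
    ∑ g ∈ monotoneTuples M d, ∏ i ∈ range d, F i (g i) =
      ∑ f ∈ univ.filter (fun f : Fin d → Fin M => ∀ i j, i ≤ j → f i ≤ f j),
        ∏ i : Fin d, F i (f i) := by
  rw [monotoneTuples, sum_image padTuple_injective.injOn]
  refine sum_congr (by congr) fun f _ => ?_
  rw [← Fin.prod_univ_eq_prod_range]
  simp [padTuple]

lemma zetaStarT_eq_sum_monotoneTuples (M d : ℕ) (s : ℕ → ℂ) :
    zetaStarT M d s =
      ∑ g ∈ monotoneTuples M d, ∏ i ∈ range d, ((g i + 1 : ℕ) : ℂ) ^ (-s i) := by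
  rw [sum_monotoneTuples_prod M d fun i k => ((k + 1 : ℕ) : ℂ) ^ (-s i), zetaStarT]

section TailSwap

def firstCrossing (n : ℕ) (q p : ℕ → ℕ) : ℕ :=
  Nat.find (⟨n, Or.inl le_rfl⟩ : ∃ j, n ≤ j ∨ q j ≤ p j)

variable {M n : ℕ} {q p : ℕ → ℕ}

lemma firstCrossing_le : firstCrossing n q p ≤ n := Nat.find_le (Or.inl le_rfl)

lemma firstCrossing_spec :
    n ≤ firstCrossing n q p ∨ q (firstCrossing n q p) ≤ p (firstCrossing n q p) :=
  Nat.find_spec (⟨n, Or.inl le_rfl⟩ : ∃ j, n ≤ j ∨ q j ≤ p j)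

lemma lt_of_lt_firstCrossing {j : ℕ} (hj : j < firstCrossing n q p) : j < n ∧ p j < q j := by
  have := Nat.find_min (⟨n, Or.inl le_rfl⟩ : ∃ j, n ≤ j ∨ q j ≤ p j) hj
  omega

lemma firstCrossing_eq {m : ℕ} (hm : n ≤ m ∨ q m ≤ p m) (hlt : ∀ j < m, j < n ∧ p j < q j) :
    firstCrossing n q p = m := by
  refine le_antisymm (Nat.find_le hm) (not_lt.mp fun h => ?_)
  have := hlt _ h
  rcases firstCrossing_spec (n := n) (q := q) (p := p) with h' | h' <;> omega

lemma crossing_at_firstCrossing (h : ∃ j < n + 1, q j ≤ p j) :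
    q (firstCrossing n q p) ≤ p (firstCrossing n q p) := by
  obtain ⟨j, hjn, hj⟩ := h
  have hle : firstCrossing n q p ≤ j := Nat.find_le (Or.inr hj)
  rcases firstCrossing_spec (n := n) (q := q) (p := p) with h' | h'
  · rwa [show firstCrossing n q p = j by omega]
  · exact h'

/-- The Lindström–Gessel–Viennot switch: at the first crossing `m` of `q` and `p`, exchange
their tails, giving `(q₀, …, q_m, p_m, p_{m+1}, …)` and `(p₀, …, p_{m-1}, q_{m+1}, …)`,
truncated to lengths `k` and `l`. -/
def tailSwap (k l n : ℕ) (z : (ℕ → ℕ) × (ℕ → ℕ)) : (ℕ → ℕ) × (ℕ → ℕ) :=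
  (fun i => if k ≤ i then 0 else if i ≤ firstCrossing n z.1 z.2 then z.1 i else z.2 (i - 1),
   fun i => if l ≤ i then 0 else if i < firstCrossing n z.1 z.2 then z.2 i else z.1 (i + 1))

variable {A B k l : ℕ}

section Components

variable {j : ℕ}

lemma tailSwap_fst_of_le (hj : j ≤ firstCrossing n q p) (hjk : j < k) :
    (tailSwap k l n (q, p)).1 j = q j := by
  simp [tailSwap, hj, hjk.not_ge]

lemma tailSwap_fst_of_lt (hj : firstCrossing n q p < j) (hjk : j < k) :
    (tailSwap k l n (q, p)).1 j = p (j - 1) := by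
  simp [tailSwap, hj.not_ge, hjk.not_ge]

lemma tailSwap_snd_of_lt (hj : j < firstCrossing n q p) (hjl : j < l) :
    (tailSwap k l n (q, p)).2 j = p j := by
  simp [tailSwap, hj, hjl.not_ge]

lemma tailSwap_snd_of_le (hj : firstCrossing n q p ≤ j) (hjl : j < l) :
    (tailSwap k l n (q, p)).2 j = q (j + 1) := by
  simp [tailSwap, hj.not_gt, hjl.not_ge]

end Components

lemma tailSwap_fst_mem (hq : q ∈ monotoneTuples M A) (hp : p ∈ monotoneTuples M B)
    (hnA : n < A) (hkB : k ≤ B + 1) (hcross : k ≤ n + 1 ∨ ∃ j < n + 1, q j ≤ p j) :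
    (tailSwap k l n (q, p)).1 ∈ monotoneTuples M k := by
  obtain ⟨hq₁, hq₂, -⟩ := mem_monotoneTuples.mp hq
  obtain ⟨hp₁, hp₂, -⟩ := mem_monotoneTuples.mp hp
  have hm := firstCrossing_le (n := n) (q := q) (p := p)
  have hqp : firstCrossing n q p + 1 < k → q (firstCrossing n q p) ≤ p (firstCrossing n q p) :=
    fun hk => hcross.elim (fun h => firstCrossing_spec.resolve_left (by omega))
      crossing_at_firstCrossing
  refine mem_monotoneTuples.mpr ⟨fun i j hij hj => ?_, fun i hi => ?_, fun i hi => if_pos hi⟩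
  · simp only [tailSwap]
    split_ifs
    all_goals first | omega | skip
    · exact hq₁ i j hij (by omega)
    · exact (hq₁ i _ (by omega) (by omega)).trans <|
        (hqp (by omega)).trans (hp₁ _ _ (by omega) (by omega))
    · exact hp₁ _ _ (by omega) (by omega)
  · simp only [tailSwap]
    split_ifs
    · omega
    · exact hq₂ _ (by omega)
    · exact hp₂ _ (by omega)

lemma tailSwap_snd_mem (hq : q ∈ monotoneTuples M A) (hp : p ∈ monotoneTuples M B)
    (hnB : n ≤ B) (hlA : l < A) :
    (tailSwap k l n (q, p)).2 ∈ monotoneTuples M l := by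
  obtain ⟨hq₁, hq₂, -⟩ := mem_monotoneTuples.mp hq
  obtain ⟨hp₁, hp₂, -⟩ := mem_monotoneTuples.mp hp
  refine mem_monotoneTuples.mpr ⟨fun i j hij hj => ?_, fun i hi => ?_, fun i hi => if_pos hi⟩
  · simp only [tailSwap]
    split_ifs
    all_goals first | omega | skip
    · exact hp₁ i j hij ((lt_of_lt_firstCrossing (j := j) (by omega)).1.trans_le hnB)
    · have hprev := lt_of_lt_firstCrossing (n := n) (q := q) (p := p)
        (j := firstCrossing n q p - 1) (by omega)
      exact (hp₁ _ _ (by omega) (by omega)).trans <|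
        hprev.2.le.trans (hq₁ _ _ (by omega) (by omega))
    · exact hq₁ _ _ (by omega) (by omega)
  · simp only [tailSwap]
    split_ifs with _ hi'
    · omega
    · exact hp₂ _ ((lt_of_lt_firstCrossing hi').1.trans_le hnB)
    · exact hq₂ _ (by omega)

lemma firstCrossing_tailSwap (hq : q ∈ monotoneTuples M A) (hnA : n < A) (hk : n < k)
    (hl : n ≤ l) :
    firstCrossing n (tailSwap k l n (q, p)).1 (tailSwap k l n (q, p)).2 =
      firstCrossing n q p := by
  have hm := firstCrossing_le (n := n) (q := q) (p := p)
  refine firstCrossing_eq ?_ fun j hj => ?_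
  · rcases hm.eq_or_lt with hmn | hmn
    · exact Or.inl hmn.ge
    · rw [tailSwap_fst_of_le le_rfl (by omega), tailSwap_snd_of_le le_rfl (by omega)]
      exact Or.inr <| (mem_monotoneTuples.mp hq).1 _ _ (by omega) (by omega)
  · rw [tailSwap_fst_of_le hj.le (by omega), tailSwap_snd_of_lt hj (by omega)]
    exact lt_of_lt_firstCrossing hj

lemma tailSwap_tailSwap {k' l' : ℕ} (hq : q ∈ monotoneTuples M k')
    (hp : p ∈ monotoneTuples M l') (hk : n < k) (hl : n ≤ l) (hk' : k' ≤ l + 1) (hl' : l' < k)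
    (hnk' : n < k') :
    tailSwap k' l' n (tailSwap k l n (q, p)) = (q, p) := by
  have hjj := firstCrossing_tailSwap (p := p) hq hnk' hk hl
  have hm := firstCrossing_le (n := n) (q := q) (p := p)
  have hq₀ := (mem_monotoneTuples.mp hq).2.2
  have hp₀ := (mem_monotoneTuples.mp hp).2.2
  generalize hz : tailSwap k l n (q, p) = z at hjj
  rw [tailSwap, hjj, ← hz]
  simp only [tailSwap, Prod.mk.injEq]
  constructor <;> funext i <;> split_ifs <;>
    first
    | omega
    | rfl
    | exact (hq₀ i (by omega)).symm
    | exact (hp₀ i (by omega)).symm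
    | exact congrArg _ (by omega)

lemma prod_tailSwap {R : Type*} [CommMonoid R] (W : ℕ → ℕ → R) :
    (∏ j ∈ range (n + 2), W j ((tailSwap (n + 2) n n (q, p)).1 j)) *
        ∏ j ∈ range n, W (j + 1) ((tailSwap (n + 2) n n (q, p)).2 j) =
      (∏ j ∈ range (n + 1), W j (q j)) * ∏ j ∈ range (n + 1), W (j + 1) (p j) := by
  have hm := firstCrossing_le (n := n) (q := q) (p := p)
  set m := firstCrossing n q p
  set z := tailSwap (n + 2) n n (q, p)
  have hz₁ : ∏ j ∈ range (n + 2), W j (z.1 j) =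
      (∏ j ∈ range (m + 1), W j (q j)) * ∏ j ∈ Ico m (n + 1), W (j + 1) (p j) := by
    rw [← prod_range_mul_prod_Ico _ (by omega : m + 1 ≤ n + 2), ← prod_Ico_add' _ m (n + 1) 1]
    congr 1
    · refine prod_congr rfl fun j hj => ?_
      rw [tailSwap_fst_of_le (by simp at hj; omega) (by simp at hj; omega)]
    · refine prod_congr rfl fun j hj => ?_
      simp only [mem_Ico] at hj
      rw [tailSwap_fst_of_lt (by omega) (by omega), Nat.add_sub_cancel]
  have hz₂ : ∏ j ∈ range n, W (j + 1) (z.2 j) =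
      (∏ j ∈ range m, W (j + 1) (p j)) * ∏ j ∈ Ico (m + 1) (n + 1), W j (q j) := by
    rw [← prod_range_mul_prod_Ico _ hm, ← prod_Ico_add' _ m n 1]
    congr 1
    · refine prod_congr rfl fun j hj => ?_
      rw [tailSwap_snd_of_lt (by simp at hj; omega) (by simp at hj; omega)]
    · refine prod_congr rfl fun j hj => ?_
      simp only [mem_Ico] at hj
      rw [tailSwap_snd_of_le hj.1 hj.2]
  rw [hz₁, hz₂, ← prod_range_mul_prod_Ico (fun j => W j (q j)) (by omega : m + 1 ≤ n + 1),
    ← prod_range_mul_prod_Ico (fun j => W (j + 1) (p j)) (by omega : m ≤ n + 1)]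
  ac_rfl

lemma sum_crossing_pairs {R : Type*} [CommSemiring R] (W : ℕ → ℕ → R) :
    ∑ z ∈ (monotoneTuples M (n + 1) ×ˢ monotoneTuples M (n + 1)).filter
        (fun z => ∃ j < n + 1, z.1 j ≤ z.2 j),
      (∏ j ∈ range (n + 1), W j (z.1 j)) * ∏ j ∈ range (n + 1), W (j + 1) (z.2 j) =
    (∑ r ∈ monotoneTuples M (n + 2), ∏ j ∈ range (n + 2), W j (r j)) *
      ∑ s ∈ monotoneTuples M n, ∏ j ∈ range n, W (j + 1) (s j) := by
  rw [sum_mul_sum, ← sum_product']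
  refine sum_nbij' (tailSwap (n + 2) n n) (tailSwap (n + 1) (n + 1) n) ?_ ?_ ?_ ?_
    fun _ _ => (prod_tailSwap W).symm
  · rintro ⟨q, p⟩ hz
    obtain ⟨hqp, hcross⟩ := mem_filter.mp hz
    obtain ⟨hq, hp⟩ := mem_product.mp hqp
    exact mem_product.mpr ⟨tailSwap_fst_mem hq hp (by omega) le_rfl (Or.inr hcross),
      tailSwap_snd_mem hq hp (by omega) (by omega)⟩
  · rintro ⟨r, s⟩ hz
    obtain ⟨hr, hs⟩ := mem_product.mp hz
    have hm := firstCrossing_le (n := n) (q := r) (p := s)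
    refine mem_filter.mpr ⟨mem_product.mpr ⟨tailSwap_fst_mem hr hs (by omega) le_rfl
      (Or.inl le_rfl), tailSwap_snd_mem hr hs le_rfl (by omega)⟩, ?_⟩
    refine ⟨firstCrossing n r s, by omega, ?_⟩
    rw [tailSwap_fst_of_le le_rfl (by omega), tailSwap_snd_of_le le_rfl (by omega)]
    exact (mem_monotoneTuples.mp hr).1 _ _ (by omega) (by omega)
  · rintro ⟨q, p⟩ hz
    obtain ⟨hq, hp⟩ := mem_product.mp (mem_filter.mp hz).1
    exact tailSwap_tailSwap hq hp (by omega) le_rfl le_rfl (by omega) (by omega)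
  · rintro ⟨r, s⟩ hz
    obtain ⟨hr, hs⟩ := mem_product.mp hz
    exact tailSwap_tailSwap hr hs (by omega) (by omega) le_rfl (by omega) (by omega)

lemma sum_noncrossing_pairs {R : Type*} [CommRing R] (W : ℕ → ℕ → R) :
    ∑ z ∈ (monotoneTuples M (n + 1) ×ˢ monotoneTuples M (n + 1)).filter
        (fun z => ∀ j < n + 1, z.2 j < z.1 j),
      (∏ j ∈ range (n + 1), W j (z.1 j)) * ∏ j ∈ range (n + 1), W (j + 1) (z.2 j) =
    (∑ q ∈ monotoneTuples M (n + 1), ∏ j ∈ range (n + 1), W j (q j)) *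
        (∑ p ∈ monotoneTuples M (n + 1), ∏ j ∈ range (n + 1), W (j + 1) (p j)) -
      (∑ r ∈ monotoneTuples M (n + 2), ∏ j ∈ range (n + 2), W j (r j)) *
        ∑ s ∈ monotoneTuples M n, ∏ j ∈ range n, W (j + 1) (s j) := by
  rw [← sum_crossing_pairs, sum_mul_sum, ← sum_product', eq_sub_iff_add_eq,
    ← sum_filter_add_sum_filter_not (monotoneTuples M (n + 1) ×ˢ monotoneTuples M (n + 1))
      fun z => ∀ j < n + 1, z.2 j < z.1 j]
  simp only [not_forall, not_lt, exists_prop]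

end TailSwap

section TwoRowTableaux

variable {M N : ℕ}

lemma mem_cellsD_twoRowRect {x : ℕ × ℕ} :
    x ∈ cellsD 2 (fun i => if i < 2 then N else 0) (fun _ => 0) ↔ x.1 < 2 ∧ x.2 < N := by
  simp only [cellsD, mem_filter, mem_product, mem_range]
  constructor
  · rintro ⟨⟨hr, -⟩, -, hj⟩
    exact ⟨hr, by simpa [hr] using hj⟩
  · rintro ⟨hr, hj⟩
    refine ⟨⟨hr, ?_⟩, Nat.zero_le _, ?_⟩ <;> simp only [hr, if_true, Nat.ofNat_pos] <;> omega

lemma cellsD_twoRowRect :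
    cellsD 2 (fun i => if i < 2 then N else 0) (fun _ => 0) = range 2 ×ˢ range N := by
  ext x
  rw [mem_cellsD_twoRowRect, mem_product, mem_range, mem_range]

def tableauRow {B : ℕ} {lam mu : ℕ → ℕ} (T : ↥(cellsD B lam mu) → Fin M) (r : ℕ) : ℕ → ℕ :=
  fun j => if h : (r, j) ∈ cellsD B lam mu then T ⟨(r, j), h⟩ else 0

lemma tableauRow_of_mem {B r j : ℕ} {lam mu : ℕ → ℕ} {T : ↥(cellsD B lam mu) → Fin M}
    (h : (r, j) ∈ cellsD B lam mu) : tableauRow T r j = T ⟨(r, j), h⟩ :=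
  dif_pos h

def tableauOfRows {q p : ℕ → ℕ} (hq : q ∈ monotoneTuples M N) (hp : p ∈ monotoneTuples M N) :
    ↥(cellsD 2 (fun i => if i < 2 then N else 0) (fun _ => 0)) → Fin M :=
  fun c => ⟨(if c.1.1 = 0 then p else q) c.1.2, by
    have hj := (mem_cellsD_twoRowRect.mp c.2).2
    split_ifs
    exacts [(mem_monotoneTuples.mp hp).2.1 _ hj, (mem_monotoneTuples.mp hq).2.1 _ hj]⟩

variable {T : ↥(cellsD 2 (fun i => if i < 2 then N else 0) (fun _ => 0)) → Fin M}

lemma tableauRow_of_ge {r j : ℕ} (hj : ¬j < N) : tableauRow T r j = 0 :=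
  dif_neg fun h => hj (mem_cellsD_twoRowRect.mp h).2

lemma tableauRow_mem (hT : IsSSYT T) {r : ℕ} (hr : r < 2) :
    tableauRow T r ∈ monotoneTuples M N := by
  refine mem_monotoneTuples.mpr ⟨fun i j hij hj => ?_, fun i hi => ?_, fun i hi => ?_⟩
  · have hi' : (r, i) ∈ cellsD 2 _ _ := mem_cellsD_twoRowRect.mpr ⟨hr, hij.trans_lt hj⟩
    have hj' : (r, j) ∈ cellsD 2 _ _ := mem_cellsD_twoRowRect.mpr ⟨hr, hj⟩
    rw [tableauRow_of_mem hi', tableauRow_of_mem hj']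
    exact hT.1 ⟨_, hi'⟩ ⟨_, hj'⟩ rfl hij
  · rw [tableauRow_of_mem (mem_cellsD_twoRowRect.mpr ⟨hr, hi⟩)]
    exact Fin.isLt _
  · exact tableauRow_of_ge hi.not_gt

lemma tableauRow_zero_lt_one (hT : IsSSYT T) {j : ℕ} (hj : j < N) :
    tableauRow T 0 j < tableauRow T 1 j := by
  have h₀ : (0, j) ∈ cellsD 2 _ _ := mem_cellsD_twoRowRect.mpr ⟨by omega, hj⟩
  have h₁ : (1, j) ∈ cellsD 2 _ _ := mem_cellsD_twoRowRect.mpr ⟨by omega, hj⟩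
  rw [tableauRow_of_mem h₀, tableauRow_of_mem h₁]
  exact hT.2 ⟨_, h₀⟩ ⟨_, h₁⟩ zero_lt_one rfl

lemma isSSYT_tableauOfRows {q p : ℕ → ℕ} (hq : q ∈ monotoneTuples M N)
    (hp : p ∈ monotoneTuples M N) (hpq : ∀ j < N, p j < q j) : IsSSYT (tableauOfRows hq hp) := by
  refine ⟨fun ⟨⟨r, i⟩, hc⟩ ⟨⟨r', j⟩, hc'⟩ hrr hij => ?_,
    fun ⟨⟨r, i⟩, hc⟩ ⟨⟨r', j⟩, hc'⟩ hrr hij => ?_⟩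
  all_goals
    obtain ⟨hr, hi⟩ := mem_cellsD_twoRowRect.mp hc
    obtain ⟨hr', hj⟩ := mem_cellsD_twoRowRect.mp hc'
    simp only at hrr hij
    simp only [tableauOfRows, Fin.mk_le_mk, Fin.mk_lt_mk]
  · subst hrr
    split_ifs
    exacts [(mem_monotoneTuples.mp hp).1 i j hij hj, (mem_monotoneTuples.mp hq).1 i j hij hj]
  · subst hij
    rw [if_pos (by omega), if_neg (by omega)]
    exact hpq i hi

lemma prod_cellsD_twoRowRect {R : Type*} [CommMonoid R] (f : ℕ → ℕ × ℕ → R) :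
    ∏ c, f (T c + 1) c.1 =
      (∏ j ∈ range N, f (tableauRow T 1 j + 1) (1, j)) *
        ∏ j ∈ range N, f (tableauRow T 0 j + 1) (0, j) := by
  have hrow : ∀ c, f (T c + 1) c.1 = f (tableauRow T c.1.1 c.1.2 + 1) c.1 := by
    rintro ⟨⟨r, j⟩, hc⟩
    rw [tableauRow_of_mem hc]
  rw [prod_congr rfl fun c _ => hrow c, prod_coe_sort _ fun x => f (tableauRow T x.1 x.2 + 1) x,
    cellsD_twoRowRect, prod_product, prod_range_succ, prod_range_one, mul_comm]

lemma tabSum_twoRowRect {R : Type*} [CommRing R] (f : ℕ → ℕ × ℕ → R) :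
    tabSum M 2 (fun i => if i < 2 then N else 0) (fun _ => 0) f =
      ∑ z ∈ (monotoneTuples M N ×ˢ monotoneTuples M N).filter
          (fun z => ∀ j < N, z.2 j < z.1 j),
        (∏ j ∈ range N, f (z.1 j + 1) (1, j)) * ∏ j ∈ range N, f (z.2 j + 1) (0, j) := by
  classical
  rw [tabSum]
  refine sum_bij' (fun T _ => (tableauRow T 1, tableauRow T 0))
    (fun z hz => tableauOfRows (mem_product.mp (mem_filter.mp hz).1).1
      (mem_product.mp (mem_filter.mp hz).1).2) (fun T hT => ?_) (fun z hz => ?_)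
    (fun T hT => ?_) (fun z hz => ?_) (fun T _ => prod_cellsD_twoRowRect f)
  · have hT := (mem_filter.mp hT).2
    exact mem_filter.mpr ⟨mem_product.mpr ⟨tableauRow_mem hT (by omega),
      tableauRow_mem hT (by omega)⟩, fun j hj => tableauRow_zero_lt_one hT hj⟩
  · exact mem_filter.mpr ⟨mem_univ _, isSSYT_tableauOfRows _ _ (mem_filter.mp hz).2⟩
  · funext ⟨⟨r, j⟩, hc⟩
    have hr := (mem_cellsD_twoRowRect.mp hc).1
    ext
    simp only [tableauOfRows]
    split_ifs with h
    · subst h; exact tableauRow_of_mem hc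
    · obtain rfl : r = 1 := by simp at hr; omega
      exact tableauRow_of_mem hc
  · obtain ⟨hq, hp⟩ := mem_product.mp (mem_filter.mp hz).1
    ext j : 2 <;> dsimp only <;> by_cases hj : j < N
    · rw [tableauRow_of_mem (mem_cellsD_twoRowRect.mpr ⟨one_lt_two, hj⟩)]
      simp [tableauOfRows]
    · rw [tableauRow_of_ge hj, (mem_monotoneTuples.mp hq).2.2 j (not_lt.mp hj)]
    · rw [tableauRow_of_mem (mem_cellsD_twoRowRect.mpr ⟨two_pos, hj⟩)]
      simp [tableauOfRows]
    · rw [tableauRow_of_ge hj, (mem_monotoneTuples.mp hp).2.2 j (not_lt.mp hj)]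

theorem zetaTF_twoRowRect (M n : ℕ) (σ : ℕ → ℂ) :
    zetaTF M 2 (fun i => if i < 2 then n + 1 else 0) (fun _ => 0)
        (fun x => if x.1 = 0 then σ (x.2 + 1) else σ x.2) =
      zetaStarT M (n + 1) σ * zetaStarT M (n + 1) (fun i => σ (i + 1)) -
        zetaStarT M (n + 2) σ * zetaStarT M n (fun i => σ (i + 1)) := by
  simp only [zetaTF, tabSum_twoRowRect, zetaStarT_eq_sum_monotoneTuples, one_ne_zero, if_true,
    if_false]
  exact sum_noncrossing_pairs fun j k => ((k + 1 : ℕ) : ℂ) ^ (-σ j)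

end TwoRowTableaux

section Convergence

open Topology

/-- The surplus `s_d - 1` of the last exponent is spread evenly over all `d + 1` factors,
using `x_d ^ (-b) ≤ x_i ^ (-b)`. -/
lemma prod_rpow_neg_le_prod_rpow_neg {d : ℕ} {x s : ℕ → ℝ} (hx : ∀ i, 1 ≤ x i)
    (hmono : ∀ i < d, x i ≤ x d) (hs : ∀ i < d, 1 ≤ s i) {b : ℝ} (hb : 0 ≤ b)
    (hsd : 1 + (d + 1) * b ≤ s d) :
    ∏ i ∈ range (d + 1), x i ^ (-s i) ≤ ∏ i ∈ range (d + 1), x i ^ (-(1 + b)) := by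
  have hx₀ : ∀ i, 0 < x i := fun i => one_pos.trans_le (hx i)
  calc ∏ i ∈ range (d + 1), x i ^ (-s i)
      ≤ (∏ i ∈ range d, x i ^ (-1 : ℝ)) * ((x d ^ (-b)) ^ d * x d ^ (-(1 + b))) := by
        rw [prod_range_succ]
        refine mul_le_mul (prod_le_prod (fun i _ => Real.rpow_nonneg (hx₀ i).le _) fun i hi =>
          Real.rpow_le_rpow_of_exponent_le (hx i) (by linarith [hs i (mem_range.mp hi)]))
          ?_ (Real.rpow_nonneg (hx₀ d).le _)
          (prod_nonneg fun i _ => Real.rpow_nonneg (hx₀ i).le _)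
        rw [← Real.rpow_natCast, ← Real.rpow_mul (hx₀ d).le, ← Real.rpow_add (hx₀ d)]
        exact Real.rpow_le_rpow_of_exponent_le (hx d) (by nlinarith)
    _ ≤ (∏ i ∈ range d, x i ^ (-1 : ℝ)) * ((∏ i ∈ range d, x i ^ (-b)) * x d ^ (-(1 + b))) := by
        rw [show (x d ^ (-b)) ^ d = ∏ _i ∈ range d, x d ^ (-b) by rw [prod_const, card_range]]
        refine mul_le_mul_of_nonneg_left (mul_le_mul_of_nonneg_right
          (prod_le_prod (fun i _ => Real.rpow_nonneg (hx₀ d).le _) fun i hi => ?_)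
          (Real.rpow_nonneg (hx₀ d).le _))
          (prod_nonneg fun i _ => Real.rpow_nonneg (hx₀ i).le _)
        exact Real.rpow_le_rpow_of_nonpos (hx₀ i) (hmono i (mem_range.mp hi)) (by linarith)
    _ = ∏ i ∈ range (d + 1), x i ^ (-(1 + b)) := by
        rw [← mul_assoc, ← prod_mul_distrib, prod_range_succ]
        congr 1
        exact prod_congr rfl fun i _ => by rw [← Real.rpow_add (hx₀ i), neg_add]

lemma sum_monotoneTuples_prod_le_prod_tsum {M d : ℕ} (F : ℕ → ℕ → ℝ)
    (hF : ∀ i k, 0 ≤ F i k) (hsum : ∀ i, Summable (F i)) :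
    ∑ g ∈ monotoneTuples M d, ∏ i ∈ range d, F i (g i) ≤ ∏ i ∈ range d, ∑' k, F i k := by
  classical
  rw [sum_monotoneTuples_prod]
  calc _ ≤ ∑ f : Fin d → Fin M, ∏ i : Fin d, F i (f i) :=
        sum_le_sum_of_subset_of_nonneg (filter_subset _ _) fun f _ _ =>
          prod_nonneg fun i _ => hF _ _
    _ = ∏ i : Fin d, ∑ k : Fin M, F i k := by rw [prod_univ_sum, Fintype.piFinset_univ]
    _ ≤ ∏ i : Fin d, ∑' k, F i k := by
        refine prod_le_prod (fun i _ => sum_nonneg fun k _ => hF _ _) fun i _ => ?_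
        rw [Fin.sum_univ_eq_sum_range (F i)]
        exact (hsum i).sum_le_tsum _ fun k _ => hF i k
    _ = ∏ i ∈ range d, ∑' k, F i k := Fin.prod_univ_eq_prod_range (fun i => ∑' k, F i k) d

lemma summable_add_one_rpow_neg {p : ℝ} (hp : 1 < p) :
    Summable fun k : ℕ => ((k : ℝ) + 1) ^ (-p) := by
  simpa using (summable_nat_add_iff 1).mpr (Real.summable_nat_rpow.mpr (by linarith : -p < -1))

theorem exists_tendsto_zetaStarT {d : ℕ} (s : ℕ → ℝ) (hs : ∀ i < d, 1 ≤ s i) (hsd : 1 < s d) :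
    ∃ z, Tendsto (fun M => zetaStarT M (d + 1) fun i => (s i : ℂ)) atTop (𝓝 z) := by
  set S : ℕ → ℝ := fun M =>
    ∑ g ∈ monotoneTuples M (d + 1), ∏ i ∈ range (d + 1), ((g i : ℝ) + 1) ^ (-s i)
  have hS : ∀ M, zetaStarT M (d + 1) (fun i => (s i : ℂ)) = S M := fun M => by
    simp only [S, zetaStarT_eq_sum_monotoneTuples, Complex.ofReal_sum, Complex.ofReal_prod]
    refine sum_congr rfl fun g _ => prod_congr rfl fun i _ => ?_
    rw [Complex.ofReal_cpow (by positivity)]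
    push_cast
    rfl
  have hmono : Monotone S := fun M M' hM =>
    sum_le_sum_of_subset_of_nonneg (monotoneTuples_mono hM) fun g _ _ =>
      prod_nonneg fun i _ => by positivity
  set b := (s d - 1) / (d + 1)
  have hb : 0 < b := div_pos (by linarith) (by positivity)
  have hterm : ∀ M, ∀ g ∈ monotoneTuples M (d + 1),
      ∏ i ∈ range (d + 1), ((g i : ℝ) + 1) ^ (-s i) ≤
        ∏ i ∈ range (d + 1), ((g i : ℝ) + 1) ^ (-(1 + b)) := fun M g hg =>
    prod_rpow_neg_le_prod_rpow_neg (x := fun i => (g i : ℝ) + 1) (fun i => by simp)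
      (fun i hi => by simpa using (mem_monotoneTuples.mp hg).1 i d hi.le (by omega)) hs hb.le
      (by rw [mul_div_cancel₀ _ (by positivity)]; linarith)
  have hbdd : ∀ M, S M ≤ ∏ i ∈ range (d + 1), ∑' k : ℕ, ((k : ℝ) + 1) ^ (-(1 + b)) := fun M =>
    (sum_le_sum (hterm M)).trans <| sum_monotoneTuples_prod_le_prod_tsum _
      (fun _ _ => by positivity) fun _ => summable_add_one_rpow_neg (by linarith)
  exact ⟨_, ((Complex.continuous_ofReal.tendsto _).comp
    (tendsto_atTop_ciSup hmono ⟨_, Set.forall_mem_range.2 hbdd⟩)).congr fun M => (hS M).symm⟩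

lemma exists_tendsto_zetaStarT_one_two {d e : ℕ} (he : e ≤ d) :
    ∃ z, Tendsto (fun M => zetaStarT M (d + 1) fun i => if i < e then (1 : ℂ) else 2)
      atTop (𝓝 z) := by
  obtain ⟨z, hz⟩ := exists_tendsto_zetaStarT (d := d) (fun i => if i < e then 1 else 2)
    (fun i _ => by split_ifs <;> norm_num) (by simp [he.not_gt])
  exact ⟨z, hz.congr fun M => congrArg _ <| funext fun i => by split_ifs <;> simp⟩

end Convergence

/-- Two-row Schur multiple zeta values as differences of products of
multiple zeta-star values. -/
theorem two_row_schur_zeta_as_zeta_star (a c : ℕ) :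
    ∃ z1 z2 z3 z4 : ℂ,
      Filter.Tendsto
          (fun M => zetaStarT M (a + c + 2) (fun i => if i < a + 1 then (1 : ℂ) else 2))
          Filter.atTop (nhds z1) ∧
      Filter.Tendsto
          (fun M => zetaStarT M (a + c + 2) (fun i => if i < a then (1 : ℂ) else 2))
          Filter.atTop (nhds z2) ∧
      Filter.Tendsto
          (fun M => zetaStarT M (a + c + 3) (fun i => if i < a + 1 then (1 : ℂ) else 2))
          Filter.atTop (nhds z3) ∧
      Filter.Tendsto
          (fun M => zetaStarT M (a + c + 1) (fun i => if i < a then (1 : ℂ) else 2))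
          Filter.atTop (nhds z4) ∧
      Filter.Tendsto
          (fun M => zetaTF M 2 (fun i => if i < 2 then a + c + 2 else 0) (fun _ => 0)
            (fun cc =>
              if cc.1 = 0 then (if cc.2 < a then (1 : ℂ) else 2)
              else (if cc.2 < a + 1 then (1 : ℂ) else 2)))
          Filter.atTop (nhds (z1 * z2 - z3 * z4)) := by
  obtain ⟨z1, h1⟩ := exists_tendsto_zetaStarT_one_two (d := a + c + 1) (e := a + 1) (by omega)
  obtain ⟨z2, h2⟩ := exists_tendsto_zetaStarT_one_two (d := a + c + 1) (e := a) (by omega)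
  obtain ⟨z3, h3⟩ := exists_tendsto_zetaStarT_one_two (d := a + c + 2) (e := a + 1) (by omega)
  obtain ⟨z4, h4⟩ := exists_tendsto_zetaStarT_one_two (d := a + c) (e := a) (by omega)
  refine ⟨z1, z2, z3, z4, h1, h2, h3, h4, ((h1.mul h2).sub (h3.mul h4)).congr fun M => ?_⟩
  have key := zetaTF_twoRowRect M (a + c + 1) fun i => if i < a + 1 then (1 : ℂ) else 2
  simp only [Nat.add_lt_add_iff_right] at key
  exact key.symm
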